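/- arXiv:1712.08246 — 4 statements merged into one kernel-verified Lean document; each statement's English description precedes it below -/
import Mathlib

section
/- The commutator of the Laplace–Beltrami operator with the operator of multiplication by p₁ satisfies [D_α, p₁·] = α·E₂; explicitly, [D_α, p₁·] = α·Σ_{i≥1} i·p_{i+1}·∂ᵢ as R-linear operators on A. -/
/- R = ℚ[α], A = R[p₁,p₂,…] (power-sum generators indexed by ℕ+).
   [D_α, p₁·] = α·E₂ = α·Σ_{i≥1} i·p_{i+1}·∂ᵢ as R-linear operators on A. -/

open MvPolynomial

noncomputable section

abbrev R : Type := Polynomial ℚ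
abbrev A : Type := MvPolynomial ℕ+ R

/-- the variable α of R = ℚ[α] -/
def α : R := Polynomial.X

/-- the power-sum generator pᵢ (i ≥ 1) -/
def p (i : ℕ+) : A := X i

/-- the partial derivative ∂/∂pᵢ -/
def d (i : ℕ+) (f : A) : A := pderiv i f

/-- the Laplace–Beltrami operator D_α -/
def Dal (f : A) : A :=
    (Polynomial.C (1/2 : ℚ) * (α - 1)) •
      (∑ᶠ i : ℕ+, (((i : ℕ) : R) * (((i : ℕ) : R) - 1)) • (p i * d i f))
  + (Polynomial.C (1/2 : ℚ) * α) •
      (∑ᶠ i : ℕ+, ∑ᶠ j : ℕ+, (((i : ℕ) : R) * ((j : ℕ) : R)) • (p (i + j) * d i (d j f)))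
  + Polynomial.C (1/2 : ℚ) •
      (∑ᶠ i : ℕ+, ∑ᶠ j : ℕ+, (((i : ℕ) : R) + ((j : ℕ) : R)) • (p i * p j * d (i + j) f))

/-- E₂ = Σ_{i≥1} i·p_{i+1}·∂ᵢ -/
def E₂ (f : A) : A := ∑ᶠ i : ℕ+, ((i : ℕ) : R) • (p (i + 1) * d i f)

/-! ### Auxiliary lemmas -/

lemma d_p1_mul (i : ℕ+) (f : A) :
    d i (p 1 * f) = (if i = 1 then f else 0) + p 1 * d i f := by
  simp only [d, p, pderiv_mul]
  congr 1
  by_cases h : i = 1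
  · subst h; simp [pderiv_X_self]
  · simp [pderiv_X_of_ne (Ne.symm h), h]

lemma d_supp (f : A) : {i : ℕ+ | d i f ≠ 0}.Finite := by
  apply Set.Finite.subset f.vars.finite_toSet
  intro i hi
  simp only [Set.mem_setOf_eq, d] at hi
  by_contra h
  exact hi (pderiv_eq_zero_of_notMem_vars h)

lemma d_zero (i : ℕ+) : d i (0 : A) = 0 := by simp [d]

lemma p1_mul_finsum (g : ℕ+ → A) : ∑ᶠ i, p 1 * g i = p 1 * ∑ᶠ i, g i := by
  simp only [← smul_eq_mul (α := A)]
  exact (smul_finsum (p 1) g).symm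

lemma pnat_add_ne_one (i j : ℕ+) : i + j ≠ 1 := by
  intro h
  have h2 : (i : ℕ) + (j : ℕ) = 1 := by exact_mod_cast congrArg (fun x : ℕ+ => (x : ℕ)) h
  have hi := i.pos
  have hj := j.pos
  omega

lemma d_d_p1_mul (i j : ℕ+) (f : A) :
    d i (d j (p 1 * f)) = (if j = 1 then d i f else 0)
      + ((if i = 1 then d j f else 0) + p 1 * d i (d j f)) := by
  rw [d_p1_mul]
  have h1 : d i ((if j = 1 then f else 0) + p 1 * d j f)
      = d i (if j = 1 then f else 0) + d i (p 1 * d j f) := by simp [d]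
  rw [h1, d_p1_mul i (d j f)]
  congr 1
  split <;> simp [d]

lemma L1 (f : A) :
    ∑ᶠ i : ℕ+, (((i : ℕ) : R) * (((i : ℕ) : R) - 1)) • (p i * d i (p 1 * f))
      = p 1 * ∑ᶠ i : ℕ+, (((i : ℕ) : R) * (((i : ℕ) : R) - 1)) • (p i * d i f) := by
  have step : ∀ i : ℕ+, (((i : ℕ) : R) * (((i : ℕ) : R) - 1)) • (p i * d i (p 1 * f))
      = (((i : ℕ) : R) * (((i : ℕ) : R) - 1)) • (p i * (if i = 1 then f else 0))
        + p 1 * ((((i : ℕ) : R) * (((i : ℕ) : R) - 1)) • (p i * d i f)) := by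
    intro i
    rw [d_p1_mul, mul_add, smul_add, mul_left_comm, mul_smul_comm]
  rw [finsum_congr step, finsum_add_distrib, p1_mul_finsum]
  · rw [finsum_eq_single _ (1 : ℕ+) (by intro x hx; simp [hx])]
    simp
  · apply Set.Finite.subset (Set.finite_singleton (1 : ℕ+))
    intro i hi
    simp only [Function.mem_support] at hi
    by_contra h
    simp only [Set.mem_singleton_iff] at h
    simp [h] at hi
  · apply Set.Finite.subset (d_supp f)
    intro i hi
    simp only [Function.mem_support] at hi
    by_contra h
    simp only [Set.mem_setOf_eq, not_not] at h
    simp [h] at hi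

lemma L2 (f : A) :
    ∑ᶠ i : ℕ+, ∑ᶠ j : ℕ+, (((i : ℕ) : R) * ((j : ℕ) : R)) • (p (i + j) * d i (d j (p 1 * f)))
      = E₂ f + (E₂ f
        + p 1 * ∑ᶠ i : ℕ+, ∑ᶠ j : ℕ+, (((i : ℕ) : R) * ((j : ℕ) : R)) • (p (i + j) * d i (d j f))) := by
  have inner : ∀ i : ℕ+,
      ∑ᶠ j : ℕ+, (((i : ℕ) : R) * ((j : ℕ) : R)) • (p (i + j) * d i (d j (p 1 * f)))
        = ((i : ℕ) : R) • (p (i + 1) * d i f) + ((if i = 1 then E₂ f else 0)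
          + p 1 * ∑ᶠ j : ℕ+, (((i : ℕ) : R) * ((j : ℕ) : R)) • (p (i + j) * d i (d j f))) := by
    intro i
    have stepj : ∀ j : ℕ+,
        (((i : ℕ) : R) * ((j : ℕ) : R)) • (p (i + j) * d i (d j (p 1 * f)))
          = (((i : ℕ) : R) * ((j : ℕ) : R)) • (p (i + j) * (if j = 1 then d i f else 0))
            + ((((i : ℕ) : R) * ((j : ℕ) : R)) • (p (i + j) * (if i = 1 then d j f else 0))
              + p 1 * ((((i : ℕ) : R) * ((j : ℕ) : R)) • (p (i + j) * d i (d j f)))) := by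
      intro j
      rw [d_d_p1_mul, mul_add, mul_add, smul_add, smul_add,
        mul_left_comm (p (i + j)) (p 1), mul_smul_comm]
    rw [finsum_congr stepj]
    have hfin1 : (Function.support fun j : ℕ+ =>
        (((i : ℕ) : R) * ((j : ℕ) : R)) • (p (i + j) * (if j = 1 then d i f else 0))).Finite := by
      apply Set.Finite.subset (Set.finite_singleton (1 : ℕ+))
      intro j hj
      simp only [Function.mem_support] at hj
      by_contra h
      simp only [Set.mem_singleton_iff] at h
      simp [h] at hj
    have hfin2 : (Function.support fun j : ℕ+ =>
        (((i : ℕ) : R) * ((j : ℕ) : R)) • (p (i + j) * (if i = 1 then d j f else 0))).Finite := by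
      apply Set.Finite.subset (d_supp f)
      intro j hj
      simp only [Function.mem_support] at hj
      by_contra h
      simp only [Set.mem_setOf_eq, not_not] at h
      rw [h] at hj
      simp at hj
    have hfin3 : (Function.support fun j : ℕ+ =>
        p 1 * ((((i : ℕ) : R) * ((j : ℕ) : R)) • (p (i + j) * d i (d j f)))).Finite := by
      apply Set.Finite.subset (d_supp f)
      intro j hj
      simp only [Function.mem_support] at hj
      by_contra h
      simp only [Set.mem_setOf_eq, not_not] at h
      rw [h, d_zero] at hj
      simp at hj
    rw [finsum_add_distrib hfin1 (Set.Finite.subset (hfin2.union hfin3) (Function.support_add _ _)),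
      finsum_add_distrib hfin2 hfin3]
    congr 1
    · rw [finsum_eq_single _ (1 : ℕ+) (by intro x hx; simp [hx])]
      simp
    congr 1
    · by_cases hi : i = 1
      · subst hi
        rw [if_pos rfl, E₂]
        refine finsum_congr fun j => ?_
        rw [if_pos rfl]
        have : ((1 : ℕ+) : ℕ) = 1 := rfl
        rw [this, add_comm (1 : ℕ+) j]
        simp
      · rw [if_neg hi]
        apply finsum_eq_zero_of_forall_eq_zero
        intro j
        simp [hi]
    · exact p1_mul_finsum _
  rw [finsum_congr inner]
  have hf1 : (Function.support fun i : ℕ+ =>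
      ((i : ℕ) : R) • (p (i + 1) * d i f)).Finite := by
    apply Set.Finite.subset (d_supp f)
    intro i hi
    simp only [Function.mem_support] at hi
    by_contra h
    simp only [Set.mem_setOf_eq, not_not] at h
    rw [h] at hi
    simp at hi
  have hf2 : (Function.support fun i : ℕ+ => (if i = 1 then E₂ f else 0)).Finite := by
    apply Set.Finite.subset (Set.finite_singleton (1 : ℕ+))
    intro i hi
    simp only [Function.mem_support] at hi
    by_contra h
    simp only [Set.mem_singleton_iff] at h
    simp [h] at hi
  have hf3 : (Function.support fun i : ℕ+ =>
      p 1 * ∑ᶠ j : ℕ+, (((i : ℕ) : R) * ((j : ℕ) : R)) • (p (i + j) * d i (d j f))).Finite := by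
    have hU : (⋃ j ∈ {j : ℕ+ | d j f ≠ 0}, {i : ℕ+ | d i (d j f) ≠ 0}).Finite :=
      Set.Finite.biUnion (d_supp f) fun j _ => d_supp (d j f)
    apply Set.Finite.subset hU
    intro i hi
    simp only [Function.mem_support] at hi
    by_contra h
    apply hi
    have hz : ∀ j : ℕ+, d i (d j f) = 0 := by
      intro j
      by_cases hj : d j f = 0
      · rw [hj, d_zero]
      · by_contra hij
        exact h (Set.mem_biUnion (show j ∈ {j : ℕ+ | d j f ≠ 0} from hj) hij)
    rw [finsum_eq_zero_of_forall_eq_zero (fun j => by rw [hz j]; simp), mul_zero]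
  rw [finsum_add_distrib hf1 (Set.Finite.subset (hf2.union hf3) (Function.support_add _ _)),
    finsum_add_distrib hf2 hf3]
  congr 1
  congr 1
  · rw [finsum_eq_single _ (1 : ℕ+) (by intro x hx; simp [hx]), if_pos rfl]
  · exact p1_mul_finsum _

lemma L3 (f : A) :
    ∑ᶠ i : ℕ+, ∑ᶠ j : ℕ+, (((i : ℕ) : R) + ((j : ℕ) : R)) • (p i * p j * d (i + j) (p 1 * f))
      = p 1 * ∑ᶠ i : ℕ+, ∑ᶠ j : ℕ+, (((i : ℕ) : R) + ((j : ℕ) : R)) • (p i * p j * d (i + j) f) := by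
  have step : ∀ i j : ℕ+, (((i : ℕ) : R) + ((j : ℕ) : R)) • (p i * p j * d (i + j) (p 1 * f))
      = p 1 * ((((i : ℕ) : R) + ((j : ℕ) : R)) • (p i * p j * d (i + j) f)) := by
    intro i j
    rw [d_p1_mul, if_neg (pnat_add_ne_one i j), zero_add,
      mul_left_comm (p i * p j) (p 1), mul_smul_comm]
  calc ∑ᶠ i : ℕ+, ∑ᶠ j : ℕ+, (((i : ℕ) : R) + ((j : ℕ) : R)) • (p i * p j * d (i + j) (p 1 * f))
      = ∑ᶠ i : ℕ+, p 1 * ∑ᶠ j : ℕ+, (((i : ℕ) : R) + ((j : ℕ) : R)) • (p i * p j * d (i + j) f) := by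
        refine finsum_congr fun i => ?_
        rw [finsum_congr (step i), p1_mul_finsum]
    _ = _ := p1_mul_finsum _

theorem commutator_Dal_mul_p1 (f : A) :
    Dal (p 1 * f) - p 1 * Dal f = α • E₂ f ∧
    Dal (p 1 * f) - p 1 * Dal f
      = α • ∑ᶠ i : ℕ+, ((i : ℕ) : R) • (p (i + 1) * d i f) := by
  have key : Dal (p 1 * f) - p 1 * Dal f = α • E₂ f := by
    simp only [Dal]
    rw [L1 f, L2 f, L3 f]
    have hb : (Polynomial.C (1/2 : ℚ) * α) • E₂ f + (Polynomial.C (1/2 : ℚ) * α) • E₂ f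
        = α • E₂ f := by
      rw [← add_smul, ← add_mul, ← Polynomial.C_add]
      norm_num
    rw [← hb]
    simp only [mul_add, mul_smul_comm, smul_add]
    abel
  exact ⟨key, by rw [key]; rfl⟩
end
end

section
/- The commutator of ∂₁ with the Laplace–Beltrami operator satisfies [∂₁, D_α] = Σ_{i≥1} (i+1)·pᵢ·∂_{i+1} (the operator E₂^⊥) as R-linear operators on A. -/
/- R = ℚ[α], A = R[p₁,p₂,…].  [∂₁, D_α] = Σ_{i≥1} (i+1)·pᵢ·∂_{i+1} = E₂^⊥. -/

open MvPolynomial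

noncomputable section

/-!
∂₁ is a derivation commuting with every ∂ᵢ, so its commutator with a summand c • q · D of D_α
(D a product of partial derivatives) is c • (∂₁q) · D, and ∂₁pₖ = δₖ₁. The summands pᵢ∂ᵢ thus
contribute only at i = 1, where the coefficient i(i − 1) vanishes; the join terms p_{i+j}∂ᵢ∂ⱼ
contribute nothing since i + j ≥ 2; the cut terms pᵢpⱼ∂_{i+j} contribute Σ (i+1)pᵢ∂_{i+1} once from
i = 1 and once from j = 1, and the factor 1/2 in front of them halves this.
-/

open Function

theorem Derivation.map_finsum_smul_mul {S B ι : Type*} [CommSemiring S] [CommSemiring B]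
    [Algebra S B] (δ : Derivation S B B) (c : ι → S) (q : ι → B) (D : ι → B → B)
    (hD : ∀ x g, δ (D x g) = D x (δ g)) (hfin : ∀ g, HasFiniteSupport fun x ↦ D x g) (f : B) :
    δ (∑ᶠ x, c x • (q x * D x f))
      = ∑ᶠ x, c x • (q x * D x (δ f)) + ∑ᶠ x, c x • (δ (q x) * D x f) := by
  have := hfin f
  have := hfin (δ f)
  rw [map_finsum δ (by fun_prop), ← finsum_add_distrib (by fun_prop) (by fun_prop)]
  refine finsum_congr fun x ↦ ?_
  rw [δ.map_smul, δ.leibniz, hD, smul_eq_mul, smul_eq_mul, ← smul_add]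
  ring_nf

namespace MvPolynomial

variable {σ S : Type*} [CommSemiring S]

theorem pderiv_pderiv_comm (i j : σ) (f : MvPolynomial σ S) :
    pderiv i (pderiv j f) = pderiv j (pderiv i f) := by
  classical
  induction f using MvPolynomial.induction_on' with
  | add f g hf hg => simp [hf, hg]
  | monomial s a =>
    by_cases h : i = j
    · rw [h]
    simp only [pderiv_monomial, tsub_right_comm, Finsupp.tsub_apply, Finsupp.single_eq_of_ne h,
      Finsupp.single_eq_of_ne (Ne.symm h), tsub_zero]
    rw [mul_right_comm]

theorem hasFiniteSupport_pderiv (f : MvPolynomial σ S) :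
    HasFiniteSupport fun i ↦ pderiv i f :=
  f.vars.finite_toSet.subset fun _ hi ↦ by_contra fun h ↦ hi (pderiv_eq_zero_of_notMem_vars h)

theorem hasFiniteSupport_pderiv_pderiv (f : MvPolynomial σ S) :
    HasFiniteSupport fun x : σ × σ ↦ pderiv x.1 (pderiv x.2 f) := by
  refine ((hasFiniteSupport_pderiv f).prod (hasFiniteSupport_pderiv f)).subset fun x hx ↦ ?_
  refine ⟨fun h ↦ hx ?_, fun h ↦ hx ?_⟩
  · simp [pderiv_pderiv_comm x.1, h]
  · simp [h]

end MvPolynomial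

theorem PNat.hasFiniteSupport_comp_add {M : Type*} [Zero M] {g : ℕ+ → M}
    (hg : HasFiniteSupport g) : HasFiniteSupport fun x : ℕ+ × ℕ+ ↦ g (x.1 + x.2) := by
  obtain ⟨N, hN⟩ := hg.bddAbove
  refine ((Set.finite_Iic N).prod (Set.finite_Iic N)).subset fun x hx ↦ ?_
  exact ⟨(PNat.lt_add_right _ _).le.trans (hN hx), (PNat.lt_add_left _ _).le.trans (hN hx)⟩

theorem d_comm (i j : ℕ+) (f : A) : d i (d j f) = d j (d i f) := pderiv_pderiv_comm i j f

theorem hasFiniteSupport_d (f : A) : HasFiniteSupport fun i ↦ d i f := hasFiniteSupport_pderiv f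

theorem hasFiniteSupport_d_d (f : A) : HasFiniteSupport fun x : ℕ+ × ℕ+ ↦ d x.1 (d x.2 f) :=
  hasFiniteSupport_pderiv_pderiv f

theorem d_one_p (i : ℕ+) : d 1 (p i) = if i = 1 then 1 else 0 := by
  simp [d, p, Pi.single_apply]

theorem d_one_p_mul_p (i j : ℕ+) :
    d 1 (p i * p j) = (if i = 1 then p j else 0) + (if j = 1 then p i else 0) := by
  rw [d, pderiv_mul, ← d, ← d, d_one_p, d_one_p]
  split_ifs <;> ring

theorem d_one_finsum_smul_mul {ι : Type*} (c : ι → R) (q : ι → A) (D : ι → A → A)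
    (hD : ∀ x g, d 1 (D x g) = D x (d 1 g)) (hfin : ∀ g, HasFiniteSupport fun x ↦ D x g)
    (f : A) : d 1 (∑ᶠ x, c x • (q x * D x f))
      = ∑ᶠ x, c x • (q x * D x (d 1 f)) + ∑ᶠ x, c x • (d 1 (q x) * D x f) :=
  (pderiv 1).map_finsum_smul_mul c q D hD hfin f

namespace Dal

def diag (f : A) : A := ∑ᶠ i : ℕ+, (((i : ℕ) : R) * (((i : ℕ) : R) - 1)) • (p i * d i f)

def join (f : A) : A :=
  ∑ᶠ i : ℕ+, ∑ᶠ j : ℕ+, (((i : ℕ) : R) * ((j : ℕ) : R)) • (p (i + j) * d i (d j f))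

def cut (f : A) : A :=
  ∑ᶠ i : ℕ+, ∑ᶠ j : ℕ+, (((i : ℕ) : R) + ((j : ℕ) : R)) • (p i * p j * d (i + j) f)

theorem eq_diag_join_cut (f : A) : Dal f =
    (Polynomial.C (1/2 : ℚ) * (α - 1)) • diag f + (Polynomial.C (1/2 : ℚ) * α) • join f
      + Polynomial.C (1/2 : ℚ) • cut f := rfl

theorem join_eq_finsum_prod (f : A) : join f =
    ∑ᶠ x : ℕ+ × ℕ+, (((x.1 : ℕ) : R) * ((x.2 : ℕ) : R)) • (p (x.1 + x.2) * d x.1 (d x.2 f)) := by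
  rw [finsum_curry _ (.fun_smul_right _ (.fun_mul_right _ (hasFiniteSupport_d_d f)))]
  rfl

theorem cut_eq_finsum_prod (f : A) : cut f =
    ∑ᶠ x : ℕ+ × ℕ+, (((x.1 : ℕ) : R) + ((x.2 : ℕ) : R)) • (p x.1 * p x.2 * d (x.1 + x.2) f) := by
  rw [finsum_curry _ (.fun_smul_right _ (.fun_mul_right _
    (PNat.hasFiniteSupport_comp_add (hasFiniteSupport_d f))))]
  rfl

end Dal

def E2perp (f : A) : A := ∑ᶠ i : ℕ+, (((i : ℕ) : R) + 1) • (p i * d (i + 1) f)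

theorem d_one_diag (f : A) : d 1 (Dal.diag f) = Dal.diag (d 1 f) := by
  have h := d_one_finsum_smul_mul (fun i : ℕ+ ↦ ((i : ℕ) : R) * (((i : ℕ) : R) - 1)) p
    (fun i g ↦ d i g) (fun i g ↦ d_comm 1 i g) hasFiniteSupport_d f
  rw [Dal.diag, Dal.diag, h, add_eq_left]
  refine finsum_eq_zero_of_forall_eq_zero fun i ↦ ?_
  rcases eq_or_ne i 1 with rfl | hi
  · simp
  · rw [d_one_p, if_neg hi, zero_mul, smul_zero]

theorem d_one_join (f : A) : d 1 (Dal.join f) = Dal.join (d 1 f) := by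
  have hD : ∀ (x : ℕ+ × ℕ+) g, d 1 (d x.1 (d x.2 g)) = d x.1 (d x.2 (d 1 g)) := fun x g ↦ by
    rw [d_comm 1, d_comm 1 x.2]
  have h := d_one_finsum_smul_mul (fun x : ℕ+ × ℕ+ ↦ ((x.1 : ℕ) : R) * ((x.2 : ℕ) : R))
    (fun x ↦ p (x.1 + x.2)) (fun x g ↦ d x.1 (d x.2 g)) hD hasFiniteSupport_d_d f
  rw [Dal.join_eq_finsum_prod, Dal.join_eq_finsum_prod, h, add_eq_left]
  refine finsum_eq_zero_of_forall_eq_zero fun x ↦ ?_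
  rw [d_one_p, if_neg (PNat.lt_add_right x.1 x.2).one_lt.ne', zero_mul, smul_zero]

theorem finsum_d_one_p_mul_p (f : A) :
    ∑ᶠ x : ℕ+ × ℕ+, (((x.1 : ℕ) : R) + ((x.2 : ℕ) : R)) • (d 1 (p x.1 * p x.2) * d (x.1 + x.2) f)
      = E2perp f + E2perp f := by
  have hfin := PNat.hasFiniteSupport_comp_add (hasFiniteSupport_d f)
  simp_rw [d_one_p_mul_p, add_mul, smul_add]
  rw [finsum_add_distrib (.fun_smul_right _ (.fun_mul_right _ hfin))
      (.fun_smul_right _ (.fun_mul_right _ hfin)),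
    finsum_curry _ (.fun_smul_right _ (.fun_mul_right _ hfin)),
    finsum_curry _ (.fun_smul_right _ (.fun_mul_right _ hfin))]
  congr 1
  · rw [finsum_eq_single _ 1 fun i hi ↦ by simp [hi]]
    simp [E2perp, add_comm]
  · refine finsum_congr fun i ↦ ?_
    rw [finsum_eq_single _ 1 fun j hj ↦ by simp [hj]]
    simp

theorem d_one_cut (f : A) : d 1 (Dal.cut f) = Dal.cut (d 1 f) + (E2perp f + E2perp f) := by
  have hD : ∀ (x : ℕ+ × ℕ+) g, d 1 (d (x.1 + x.2) g) = d (x.1 + x.2) (d 1 g) :=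
    fun x g ↦ d_comm 1 _ g
  have h := d_one_finsum_smul_mul (fun x : ℕ+ × ℕ+ ↦ ((x.1 : ℕ) : R) + ((x.2 : ℕ) : R))
    (fun x ↦ p x.1 * p x.2) (fun x g ↦ d (x.1 + x.2) g) hD
    (fun g ↦ PNat.hasFiniteSupport_comp_add (hasFiniteSupport_d g)) f
  rw [Dal.cut_eq_finsum_prod, Dal.cut_eq_finsum_prod, h, finsum_d_one_p_mul_p]

theorem commutator_d1_Dal (f : A) :
    d 1 (Dal f) - Dal (d 1 f)
      = ∑ᶠ i : ℕ+, (((i : ℕ) : R) + 1) • (p i * d (i + 1) f) := by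
  have expand : d 1 (Dal f) = (Polynomial.C (1/2 : ℚ) * (α - 1)) • d 1 (Dal.diag f)
      + (Polynomial.C (1/2 : ℚ) * α) • d 1 (Dal.join f)
      + Polynomial.C (1/2 : ℚ) • d 1 (Dal.cut f) := by
    simp only [Dal.eq_diag_join_cut, d, map_add, Derivation.map_smul]
  have half : Polynomial.C (1/2 : ℚ) • (E2perp f + E2perp f) = E2perp f := by
    rw [← two_smul R, smul_smul, ← Polynomial.C_ofNat, ← Polynomial.C_mul]
    norm_num
  rw [expand, d_one_diag, d_one_join, d_one_cut, Dal.eq_diag_join_cut (d 1 f), smul_add, half]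
  show _ = E2perp f
  abel
end
end

section
/- The operator Δ := [D_α, E₂] has the explicit form Δ = (α−1)·Σ_{i≥2} (i−1)²·pᵢ·∂_{i−1} + α·Σ_{i,j≥1} i·j·p_{i+j+1}·∂ᵢ∂ⱼ + Σ_{i,j≥1} (i+j−1)·pᵢ·pⱼ·∂_{i+j−1} as R-linear operators on A. -/
/- R = ℚ[α], A = R[p₁,p₂,…].  Δ := [D_α, E₂] equals
   (α−1)·Σ_{i≥2}(i−1)²·pᵢ·∂_{i−1} + α·Σ_{i,j≥1} ij·p_{i+j+1}·∂ᵢ∂ⱼ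
   + Σ_{i,j≥1}(i+j−1)·pᵢ·pⱼ·∂_{i+j−1}.
   (In the first sum the i = 1 term has zero coefficient, so summing over all i ≥ 1
   with truncated subtraction in ℕ+ agrees with summing over i ≥ 2.) -/

open MvPolynomial

noncomputable section

/-- Δ = [D_α, E₂] -/
def Δop (f : A) : A := Dal (E₂ f) - E₂ (Dal f)

/-!
`E₂` is the derivation of `A` with `pₖ ↦ k·p_{k+1}`, so `[∂ᵢ, E₂] = (i - 1)·∂_{i-1}`. Commuting
`E₂` past each of the three pieces of `D_α` thus produces terms where `E₂` acts on the coefficient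
`p`'s and terms where one derivative `∂ᵢ` is lowered to `∂_{i-1}`. After the shift `i ↦ i + 1`
these have the same shape, and what is left beyond twice the claimed sum telescopes, in `i` and
in `j` separately. All sums are finite, since `f` involves only `p₁, …, p_N` for some `N`.
-/

open Finset

theorem MvPolynomial.mkDerivation_eq_finsum {σ S : Type*} [CommSemiring S]
    (v : σ → MvPolynomial σ S) (g : MvPolynomial σ S) :
    mkDerivation S v g = ∑ᶠ i, v i * pderiv i g := by
  classical
  rw [finsum_eq_sum_of_support_subset (s := g.vars)]
  · let D : Derivation S (MvPolynomial σ S) (MvPolynomial σ S) := ∑ i ∈ g.vars, v i • pderiv i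
    have hD (x) : D x = ∑ i ∈ g.vars, v i * pderiv i x := by
      rw [← Derivation.coeFnAddMonoidHom_apply, map_sum, Finset.sum_apply]
      simp [Derivation.coeFnAddMonoidHom_apply]
    rw [← hD]
    refine derivation_eq_of_forall_mem_vars fun j hj => ?_
    simp [hD, pderiv_X, Pi.single_apply, hj]
  · intro i hi
    by_contra h
    exact hi (by simp [pderiv_eq_zero_of_notMem_vars h])

theorem MvPolynomial.pderiv_comm {σ S : Type*} [CommRing S] (i j : σ) (g : MvPolynomial σ S) :
    pderiv i (pderiv j g) = pderiv j (pderiv i g) := by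
  classical
  have : ⁅pderiv i, pderiv j⁆ = (0 : Derivation S (MvPolynomial σ S) (MvPolynomial σ S)) :=
    derivation_ext fun m => by
      rw [Derivation.commutator_apply]
      simp [pderiv_X, Pi.single_apply, apply_ite]
  rw [← sub_eq_zero, ← Derivation.commutator_apply, this, Derivation.zero_apply]

theorem PNat.sum_Iic_sub_add_one {M : Type*} [AddCommGroup M] (H : ℕ+ → M) (N : ℕ+) :
    ∑ i ∈ Iic N, (H i - H (i + 1)) = H 1 - H (N + 1) := by
  induction N using PNat.recOn with
  | one => simp [← PNat.bot_eq_one, Iic_bot]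
  | succ N ih =>
    rw [← Iio_insert, sum_insert notMem_Iio_self, Iio_add_one_eq_Iic, ih]
    abel

theorem finsum_eq_sum_Iic {α M : Type*} [LinearOrder α] [LocallyFiniteOrderBot α]
    [AddCommMonoid M] {F : α → M} {N : α} (h : ∀ i, N < i → F i = 0) :
    ∑ᶠ i, F i = ∑ i ∈ Iic N, F i :=
  finsum_eq_sum_of_support_subset F fun i hi =>
    mem_coe.2 <| mem_Iic.2 <| not_lt.1 fun hlt => hi (h i hlt)

theorem finsum_finsum_eq_sum_Iic {α M : Type*} [LinearOrder α] [LocallyFiniteOrderBot α]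
    [AddCommMonoid M] {F : α → α → M} {N : α} (h : ∀ i j, N < i ∨ N < j → F i j = 0) :
    ∑ᶠ i, ∑ᶠ j, F i j = ∑ i ∈ Iic N, ∑ j ∈ Iic N, F i j := by
  rw [finsum_congr fun i => finsum_eq_sum_Iic fun j hj => h i j (.inr hj)]
  exact finsum_eq_sum_Iic fun i hi => sum_eq_zero fun j _ => h i j (.inl hi)

def E₂Der : Derivation R A A := mkDerivation R fun k : ℕ+ => (k : R) • p (k + 1)

theorem E₂_eq_E₂Der : E₂ = E₂Der := by
  ext g
  rw [E₂Der, mkDerivation_eq_finsum]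
  simp only [E₂, d, p, smul_mul_assoc]

theorem E₂Der_p (m : ℕ+) : E₂Der (p m) = (m : R) • p (m + 1) :=
  mkDerivation_X _ _ _

theorem E₂Der_p_mul (m : ℕ+) (x : A) :
    E₂Der (p m * x) = (m : R) • (p (m + 1) * x) + p m * E₂Der x := by
  rw [Derivation.leibniz, E₂Der_p, smul_eq_mul, smul_eq_mul, mul_smul_comm, mul_comm x, add_comm]

/-- At `i = 1` the subtraction `i - 1` in `ℕ+` truncates to `1`, but then the coefficient
vanishes. -/
theorem pderiv_E₂Der (i : ℕ+) (g : A) :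
    pderiv i (E₂Der g) = E₂Der (pderiv i g) + ((i : R) - 1) • pderiv (i - 1) g := by
  suffices ⁅pderiv i, E₂Der⁆ = ((i : R) - 1) • pderiv (i - 1) by
    rw [← sub_eq_iff_eq_add', ← Derivation.commutator_apply, this, Derivation.smul_apply]
  refine derivation_ext fun m => ?_
  rw [Derivation.commutator_apply, Derivation.smul_apply, E₂Der, mkDerivation_X]
  cases i using PNat.recOn with
  | one => simp [p, pderiv_X, Pi.single_apply, apply_ite, (PNat.lt_add_left 1 m).ne']
  | succ k =>
    obtain rfl | h := eq_or_ne m k <;> simp [p, pderiv_X, Pi.single_apply, apply_ite, *]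

def weightOp (g : A) : A := ∑ᶠ i : ℕ+, ((i : R) * ((i : R) - 1)) • (p i * d i g)

def joinOp (g : A) : A := ∑ᶠ i : ℕ+, ∑ᶠ j : ℕ+, ((i : R) * (j : R)) • (p (i + j) * d i (d j g))

def cutOp (g : A) : A := ∑ᶠ i : ℕ+, ∑ᶠ j : ℕ+, ((i : R) + (j : R)) • (p i * p j * d (i + j) g)

theorem Dal_eq (g : A) :
    Dal g = (Polynomial.C (1/2 : ℚ) * (α - 1)) • weightOp g
      + (Polynomial.C (1/2 : ℚ) * α) • joinOp g + Polynomial.C (1/2 : ℚ) • cutOp g :=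
  rfl

theorem Δop_eq (f : A) :
    Δop f = (Polynomial.C (1/2 : ℚ) * (α - 1)) • (weightOp (E₂ f) - E₂ (weightOp f))
      + (Polynomial.C (1/2 : ℚ) * α) • (joinOp (E₂ f) - E₂ (joinOp f))
      + Polynomial.C (1/2 : ℚ) • (cutOp (E₂ f) - E₂ (cutOp f)) := by
  rw [Δop, Dal_eq, Dal_eq, E₂_eq_E₂Der]
  simp only [map_add, Derivation.map_smul]
  module

theorem exists_forall_lt_d_eq_zero (f : A) : ∃ N : ℕ+, ∀ k, N < k → d k f = 0 :=
  ⟨f.vars.sup id, fun _ hk =>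
    pderiv_eq_zero_of_notMem_vars fun hmem => (Finset.le_sup (f := id) hmem).not_gt hk⟩

section

variable {f : A} {N : ℕ+}

theorem d_d_eq_zero (hN : ∀ k, N < k → d k f = 0) {i j : ℕ+} (h : N < i ∨ N < j) :
    d i (d j f) = 0 := by
  simp only [d] at hN ⊢
  rcases h with h | h
  · rw [pderiv_comm, hN i h, map_zero]
  · rw [hN j h, map_zero]

theorem d_E₂_eq_zero (hN : ∀ k, N < k → d k f = 0) (k : ℕ+) (hk : N + 1 < k) :
    d k (E₂ f) = 0 := by
  have hk' : N < k - 1 := (PNat.lt_add_right N 1).trans_le (PNat.le_sub_one_of_lt hk)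
  simp only [d] at hN ⊢
  rw [E₂_eq_E₂Der, pderiv_E₂Der, hN k ((PNat.lt_add_right N 1).trans hk), hN _ hk', map_zero,
    smul_zero, add_zero]

theorem weightOp_eq_sum_Iic (hN : ∀ k, N < k → d k f = 0) :
    weightOp f = ∑ i ∈ Iic N, ((i : R) * ((i : R) - 1)) • (p i * d i f) :=
  finsum_eq_sum_Iic fun i hi => by rw [hN i hi, mul_zero, smul_zero]

theorem joinOp_eq_sum_Iic (hN : ∀ k, N < k → d k f = 0) :
    joinOp f = ∑ i ∈ Iic N, ∑ j ∈ Iic N, ((i : R) * (j : R)) • (p (i + j) * d i (d j f)) :=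
  finsum_finsum_eq_sum_Iic fun _ _ h => by rw [d_d_eq_zero hN h, mul_zero, smul_zero]

theorem cutOp_eq_sum_Iic (hN : ∀ k, N < k → d k f = 0) :
    cutOp f = ∑ i ∈ Iic N, ∑ j ∈ Iic N, ((i : R) + (j : R)) • (p i * p j * d (i + j) f) :=
  finsum_finsum_eq_sum_Iic fun i j h => by
    have : N < i + j :=
      h.elim (·.trans (PNat.lt_add_right i j)) (·.trans (PNat.lt_add_left j i))
    rw [hN _ this, mul_zero, smul_zero]

theorem weightOp_E₂_sub (hN : ∀ k, N < k → d k f = 0) :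
    weightOp (E₂ f) - E₂ (weightOp f)
      = (2 : R) • ∑ᶠ i : ℕ+, (((i : R) - 1) ^ 2) • (p i * d (i - 1) f) := by
  have hN1 : ∀ k, N + 1 < k → d k f = 0 := fun k hk => hN k ((PNat.lt_add_right N 1).trans hk)
  set H : ℕ+ → A := fun i => (((i : R) - 2) * ((i : R) - 1) ^ 2) • (p i * d (i - 1) f)
  have telescope : ∑ i ∈ Iic (N + 1), (H i - H (i + 1)) = 0 := by
    rw [PNat.sum_Iic_sub_add_one]
    simp [H, PNat.add_sub, hN (N + 1) (PNat.lt_add_right N 1)]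
  rw [weightOp_eq_sum_Iic (d_E₂_eq_zero hN), weightOp_eq_sum_Iic hN1,
    finsum_eq_sum_Iic fun i hi => by
      rw [hN _ ((PNat.lt_add_right N 1).trans_le (PNat.le_sub_one_of_lt hi)), mul_zero, smul_zero],
    E₂_eq_E₂Der, map_sum, ← sum_sub_distrib, smul_sum, ← sub_eq_zero, ← sum_sub_distrib,
    ← telescope]
  refine sum_congr rfl fun i _ => ?_
  simp only [H, d, pderiv_E₂Der, Derivation.map_smul, E₂Der_p_mul, PNat.add_sub, mul_add,
    mul_smul_comm]
  push_cast
  module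

theorem joinOp_E₂_sub (hN : ∀ k, N < k → d k f = 0) :
    joinOp (E₂ f) - E₂ (joinOp f)
      = (2 : R) • ∑ᶠ i : ℕ+, ∑ᶠ j : ℕ+, ((i : R) * (j : R)) • (p (i + j + 1) * d i (d j f)) := by
  have hN1 : ∀ k, N + 1 < k → d k f = 0 := fun k hk => hN k ((PNat.lt_add_right N 1).trans hk)
  set Hi : ℕ+ → ℕ+ → A := fun i j =>
    ((i : R) * j * ((i : R) - 1)) • (p (i + j) * d (i - 1) (d j f))
  set Hj : ℕ+ → ℕ+ → A := fun i j =>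
    ((i : R) * j * ((j : R) - 1)) • (p (i + j) * d i (d (j - 1) f))
  rw [joinOp_eq_sum_Iic (d_E₂_eq_zero hN), joinOp_eq_sum_Iic hN1,
    finsum_finsum_eq_sum_Iic fun i j h => by rw [d_d_eq_zero hN1 h, mul_zero, smul_zero],
    ← sub_eq_zero]
  calc _ = ∑ i ∈ Iic (N + 1), ∑ j ∈ Iic (N + 1),
        ((Hi i j - Hi (i + 1) j) + (Hj i j - Hj i (j + 1))) := by
        rw [E₂_eq_E₂Der, map_sum, smul_sum, ← sum_sub_distrib, ← sum_sub_distrib]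
        refine sum_congr rfl fun i _ => ?_
        rw [map_sum, smul_sum, ← sum_sub_distrib, ← sum_sub_distrib]
        refine sum_congr rfl fun j _ => ?_
        simp only [Hi, Hj, d, pderiv_E₂Der, map_add, Derivation.map_smul, E₂Der_p_mul, PNat.add_sub,
          mul_add, mul_smul_comm, add_right_comm i 1 j, ← add_assoc]
        push_cast
        module
    _ = 0 := by
        rw [sum_congr rfl fun i _ => sum_add_distrib, sum_add_distrib, sum_comm]
        simp only [PNat.sum_Iic_sub_add_one]
        simp [Hi, Hj, PNat.add_sub, d_d_eq_zero hN]

theorem cutOp_E₂_sub (hN : ∀ k, N < k → d k f = 0) :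
    cutOp (E₂ f) - E₂ (cutOp f)
      = (2 : R) • ∑ᶠ i : ℕ+, ∑ᶠ j : ℕ+,
          ((i : R) + (j : R) - 1) • (p i * p j * d (i + j - 1) f) := by
  have hN1 : ∀ k, N + 1 < k → d k f = 0 := fun k hk => hN k ((PNat.lt_add_right N 1).trans hk)
  have hcut : ∀ i j : ℕ+, N < i ∨ N < j → d (i + j - 1) f = 0 := fun i j h => hN _ <| by
    rcases h with h | h
    · exact h.trans_le (PNat.le_sub_one_of_lt (PNat.lt_add_right i j))
    · exact h.trans_le (PNat.le_sub_one_of_lt (PNat.lt_add_left j i))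
  set Hi : ℕ+ → ℕ+ → A := fun i j =>
    (((i : R) + j - 1) * ((i : R) - 1)) • (p i * p j * d (i + j - 1) f)
  set Hj : ℕ+ → ℕ+ → A := fun i j =>
    (((i : R) + j - 1) * ((j : R) - 1)) • (p i * p j * d (i + j - 1) f)
  rw [cutOp_eq_sum_Iic (d_E₂_eq_zero hN), cutOp_eq_sum_Iic hN1,
    finsum_finsum_eq_sum_Iic fun i j h => by
      rw [hcut i j (h.imp (PNat.lt_add_right N 1).trans (PNat.lt_add_right N 1).trans), mul_zero,
        smul_zero],
    ← sub_eq_zero]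
  calc _ = ∑ i ∈ Iic (N + 1), ∑ j ∈ Iic (N + 1),
        ((Hi i j - Hi (i + 1) j) + (Hj i j - Hj i (j + 1))) := by
        rw [E₂_eq_E₂Der, map_sum, smul_sum, ← sum_sub_distrib, ← sum_sub_distrib]
        refine sum_congr rfl fun i _ => ?_
        rw [map_sum, smul_sum, ← sum_sub_distrib, ← sum_sub_distrib]
        refine sum_congr rfl fun j _ => ?_
        simp only [Hi, Hj, d, pderiv_E₂Der, Derivation.map_smul, mul_assoc, E₂Der_p_mul,
          PNat.add_sub, mul_add, mul_smul_comm, add_right_comm i 1 j, ← add_assoc]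
        push_cast
        module
    _ = 0 := by
        rw [sum_congr rfl fun i _ => sum_add_distrib, sum_add_distrib, sum_comm]
        simp only [PNat.sum_Iic_sub_add_one]
        have hlt : N < N + 1 + 1 := (PNat.lt_add_right N 1).trans (PNat.lt_add_right _ 1)
        simp [Hi, Hj, fun j => hcut _ j (.inl hlt), fun i => hcut i _ (.inr hlt)]

end

theorem C_half_mul_two : Polynomial.C (1/2 : ℚ) * 2 = 1 := by
  rw [← map_ofNat Polynomial.C 2, ← map_mul]
  norm_num

theorem Delta_explicit (f : A) :
    Δop f
      = (α - 1) • (∑ᶠ i : ℕ+, ((((i : ℕ) : R) - 1) ^ 2) • (p i * d (i - 1) f))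
      + α • (∑ᶠ i : ℕ+, ∑ᶠ j : ℕ+,
          (((i : ℕ) : R) * ((j : ℕ) : R)) • (p (i + j + 1) * d i (d j f)))
      + ∑ᶠ i : ℕ+, ∑ᶠ j : ℕ+,
          (((i : ℕ) : R) + ((j : ℕ) : R) - 1) • (p i * p j * d (i + j - 1) f) := by
  obtain ⟨N, hN⟩ := exists_forall_lt_d_eq_zero f
  rw [Δop_eq, weightOp_E₂_sub hN, joinOp_E₂_sub hN, cutOp_E₂_sub hN]
  simp only [smul_smul, mul_right_comm _ _ (2 : R), C_half_mul_two, one_mul, one_smul]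
end
end

section
/- Let n ≥ 1, let λ, μ, ν be partitions of n, and let π be a permutation of Fin n whose orbit type is λ. Then the number of pairs (σ, τ) of permutations of Fin n such that the orbit type of σ is μ, the orbit type of τ is ν, and σ∘τ = π, equals the number of bipartite matchings δ in G_{μ,ν}(π). (In other words, the connection coefficient c^λ_{μν} of the class algebra of the symmetric group equals the number of bipartite matchings in G^λ_{μν}.) -/
/- For partitions λ, μ, ν of n and a permutation π of Fin n of orbit type λ, the
   number of pairs (σ, τ) of permutations with orbit types μ, ν and σ∘τ = π equals
   the number of bipartite matchings in G_{μ,ν}(π):  c^λ_{μν} = #{bipartite δ ∈ G^λ_{μν}}. -/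

open Equiv

/-- The orbit type of a permutation: the multiset of sizes of the orbits of the cyclic
    group it generates, i.e. its cycle lengths with each fixed point contributing a
    part equal to 1. -/
noncomputable def orbitType {X : Type} [Fintype X] [DecidableEq X]
    (ω : Equiv.Perm X) : Multiset ℕ :=
  ω.cycleType + Multiset.replicate (Finset.univ.filter fun x => ω x = x).card 1

/-- A matching on V: a fixed-point-free involution. -/
def IsMatching {V : Type} (δ : Equiv.Perm V) : Prop :=
  (∀ v, δ (δ v) = v) ∧ ∀ v, δ v ≠ v

/-- A matching on Fin n ⊕ Fin n is bipartite if it sends the left summand into the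
    right summand. -/
def IsBipartite {n : ℕ} (δ : Equiv.Perm (Fin n ⊕ Fin n)) : Prop :=
  ∀ i : Fin n, ∃ j : Fin n, δ (Sum.inl i) = Sum.inr j

/-- The canonical matching g : inl i ↦ inr i, inr i ↦ inl i. -/
def gMatch (n : ℕ) : Equiv.Perm (Fin n ⊕ Fin n) := Equiv.sumComm (Fin n) (Fin n)

/-- The matching b_π : inr i ↦ inl (π i), inl j ↦ inr (π⁻¹ j). -/
def bMatch {n : ℕ} (π : Equiv.Perm (Fin n)) : Equiv.Perm (Fin n ⊕ Fin n) :=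
  (Equiv.sumCongr (π⁻¹ : Equiv.Perm (Fin n)) π).trans (Equiv.sumComm (Fin n) (Fin n))

/-- G_{μ,ν}(π): the matchings δ with orbit type of g∘δ equal to μ ⊎ μ and orbit type
    of b_π∘δ equal to ν ⊎ ν. -/
def Gset {n : ℕ} (μ ν : Multiset ℕ) (π : Equiv.Perm (Fin n)) :
    Set (Equiv.Perm (Fin n ⊕ Fin n)) :=
  {δ | IsMatching δ ∧ orbitType (gMatch n * δ) = μ + μ ∧ orbitType (bMatch π * δ) = ν + ν}

/-
A bipartite matching δ of `Fin n ⊕ Fin n` is `matchingOfPerm σ`, i.e. `δ (inr j) = inl (σ j)`,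
for exactly one permutation σ, and g, b_π are the matchings of 1 and π. The product of the
matchings of a and b is `sumCongr (a * b⁻¹) (a⁻¹ * b)`, whose two blocks are conjugate up to
inversion, so its orbit type is twice that of `a⁻¹ * b`. Hence `matchingOfPerm σ ∈ G_{μ,ν}(π)` iff
σ has type μ and `σ⁻¹ * π` has type ν, i.e. iff `(σ, σ⁻¹ * π)` is one of the factorizations
being counted.
-/

theorem setOf_mul_eq_eq_image {G : Type*} [Group G] (P Q : G → Prop) (g : G) :
    {st : G × G | P st.1 ∧ Q st.2 ∧ st.1 * st.2 = g} =
      (fun a => (a, a⁻¹ * g)) '' {a | P a ∧ Q (a⁻¹ * g)} := by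
  ext ⟨a, b⟩
  constructor
  · rintro ⟨ha, hb, rfl⟩
    refine ⟨a, ⟨ha, ?_⟩, ?_⟩ <;> simp [hb]
  · rintro ⟨a, ⟨ha, hb⟩, h⟩
    obtain ⟨rfl, rfl⟩ := Prod.mk.inj h
    exact ⟨ha, hb, mul_inv_cancel_left a g⟩

namespace Equiv.Perm

variable {α β : Type*}

theorem sumCongr_one_eq_extendDomain (a : Perm α) :
    sumCongr a (1 : Perm β) = a.extendDomain sumIsLeft.symm := by
  ext (i | j)
  · exact (extendDomain_apply_subtype a sumIsLeft.symm (b := Sum.inl i) rfl).symm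
  · exact (extendDomain_apply_not_subtype a sumIsLeft.symm (b := Sum.inr j) (by simp)).symm

theorem one_sumCongr_eq_extendDomain (b : Perm β) :
    sumCongr (1 : Perm α) b = b.extendDomain sumIsRight.symm := by
  ext (i | j)
  · exact (extendDomain_apply_not_subtype b sumIsRight.symm (b := Sum.inl i) (by simp)).symm
  · exact (extendDomain_apply_subtype b sumIsRight.symm (b := Sum.inr j) rfl).symm

theorem cycleType_sumCongr [Fintype α] [DecidableEq α] [Fintype β] [DecidableEq β]
    (a : Perm α) (b : Perm β) : (sumCongr a b).cycleType = a.cycleType + b.cycleType := by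
  have hdisj : Disjoint (sumCongr a (1 : Perm β)) (sumCongr (1 : Perm α) b) := by
    rintro (i | j)
    exacts [Or.inr rfl, Or.inl rfl]
  rw [← mul_one a, ← one_mul b, ← sumCongr_mul, hdisj.cycleType_mul, mul_one, one_mul,
    sumCongr_one_eq_extendDomain, one_sumCongr_eq_extendDomain, cycleType_extendDomain,
    cycleType_extendDomain]

end Equiv.Perm

open Equiv.Perm

section OrbitType

variable {X Y : Type} [Fintype X] [DecidableEq X] [Fintype Y] [DecidableEq Y]

theorem orbitType_eq_parts_partition (ω : Perm X) : orbitType ω = ω.partition.parts := by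
  rw [orbitType, parts_partition, ← Finset.card_compl]
  congr 3
  ext x
  simp [mem_support]

theorem orbitType_eq_orbitType_iff {a b : Perm X} : orbitType a = orbitType b ↔ IsConj a b := by
  rw [partition_eq_of_isConj, Nat.Partition.ext_iff, orbitType_eq_parts_partition,
    orbitType_eq_parts_partition]

theorem orbitType_inv (ω : Perm X) : orbitType ω⁻¹ = orbitType ω :=
  orbitType_eq_orbitType_iff.2 (isConj_iff_cycleType_eq.2 (cycleType_inv ω))

theorem orbitType_mul_comm (a b : Perm X) : orbitType (a * b) = orbitType (b * a) :=
  orbitType_eq_orbitType_iff.2 (isConj_iff.2 ⟨b, by group⟩)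

theorem orbitType_sumCongr (a : Perm X) (b : Perm Y) :
    orbitType (Equiv.sumCongr a b) = orbitType a + orbitType b := by
  simp only [orbitType_eq_parts_partition, parts_partition, ← sum_cycleType, cycleType_sumCongr,
    Multiset.sum_add, Fintype.card_sum]
  have ha := sum_cycleType_le a
  have hb := sum_cycleType_le b
  rw [show Fintype.card X + Fintype.card Y - (a.cycleType.sum + b.cycleType.sum) =
      (Fintype.card X - a.cycleType.sum) + (Fintype.card Y - b.cycleType.sum) by omega,
    Multiset.replicate_add]
  abel

end OrbitType

def matchingOfPerm {α : Type} (σ : Perm α) : Perm (α ⊕ α) :=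
  (Equiv.sumCongr (σ⁻¹ : Perm α) σ).trans (sumComm α α)

section MatchingOfPerm

variable {α : Type}

@[simp]
theorem matchingOfPerm_inl (σ : Perm α) (i : α) :
    matchingOfPerm σ (Sum.inl i) = Sum.inr (σ⁻¹ i) := rfl

@[simp]
theorem matchingOfPerm_inr (σ : Perm α) (j : α) :
    matchingOfPerm σ (Sum.inr j) = Sum.inl (σ j) := rfl

theorem gMatch_eq_matchingOfPerm_one (n : ℕ) : gMatch n = matchingOfPerm 1 := by
  ext (i | j) <;> rfl

theorem bMatch_eq_matchingOfPerm {n : ℕ} (π : Perm (Fin n)) : bMatch π = matchingOfPerm π := rfl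

theorem isMatching_matchingOfPerm (σ : Perm α) : IsMatching (matchingOfPerm σ) :=
  ⟨by rintro (i | j) <;> simp, by rintro (i | j) <;> simp⟩

theorem matchingOfPerm_injective : Function.Injective (matchingOfPerm (α := α)) := by
  intro σ τ h
  ext j
  simpa using congrArg (fun δ => δ (Sum.inr j)) h

theorem matchingOfPerm_mul_matchingOfPerm (a b : Perm α) :
    matchingOfPerm a * matchingOfPerm b = Equiv.sumCongr (a * b⁻¹) (a⁻¹ * b) := by
  ext (i | j) <;> rfl

theorem orbitType_matchingOfPerm_mul_matchingOfPerm [Fintype α] [DecidableEq α] (a b : Perm α) :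
    orbitType (matchingOfPerm a * matchingOfPerm b) = 2 • orbitType (a⁻¹ * b) := by
  rw [matchingOfPerm_mul_matchingOfPerm, orbitType_sumCongr, two_nsmul, orbitType_mul_comm,
    ← orbitType_inv, mul_inv_rev, inv_inv]

end MatchingOfPerm

theorem IsBipartite.exists_matchingOfPerm_eq {n : ℕ} {δ : Perm (Fin n ⊕ Fin n)}
    (hδ : IsBipartite δ) (hmatch : IsMatching δ) : ∃ σ, matchingOfPerm σ = δ := by
  choose f hf using hδ
  have hf_inj : Function.Injective f := fun i j hij =>
    Sum.inl_injective (δ.injective (by rw [hf, hf, hij]))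
  let e := Equiv.ofBijective f (Finite.injective_iff_bijective.1 hf_inj)
  refine ⟨e⁻¹, ?_⟩
  ext (i | j)
  · simp [hf, e]
  · obtain ⟨i, rfl⟩ := e.surjective j
    calc matchingOfPerm e⁻¹ (Sum.inr (e i)) = Sum.inl i := congrArg Sum.inl (e.symm_apply_apply i)
      _ = δ (Sum.inr (f i)) := by rw [← hf, hmatch.1]

theorem matchingOfPerm_mem_Gset_iff {n : ℕ} {μ ν : Multiset ℕ} {π σ : Perm (Fin n)} :
    matchingOfPerm σ ∈ Gset μ ν π ↔ orbitType σ = μ ∧ orbitType (σ⁻¹ * π) = ν := by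
  simp only [Gset, Set.mem_ofPred_eq, gMatch_eq_matchingOfPerm_one, bMatch_eq_matchingOfPerm,
    orbitType_matchingOfPerm_mul_matchingOfPerm, ← two_nsmul, nsmul_right_inj two_ne_zero,
    isMatching_matchingOfPerm, true_and, inv_one, one_mul]
  rw [← orbitType_inv (σ⁻¹ * π), mul_inv_rev, inv_inv]

theorem bipartite_Gset_eq_image_matchingOfPerm {n : ℕ} (μ ν : Multiset ℕ) (π : Perm (Fin n)) :
    {δ | δ ∈ Gset μ ν π ∧ IsBipartite δ} =
      matchingOfPerm '' {σ | orbitType σ = μ ∧ orbitType (σ⁻¹ * π) = ν} := by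
  ext δ
  constructor
  · rintro ⟨hG, hbip⟩
    obtain ⟨σ, rfl⟩ := hbip.exists_matchingOfPerm_eq hG.1
    exact ⟨σ, matchingOfPerm_mem_Gset_iff.1 hG, rfl⟩
  · rintro ⟨σ, hσ, rfl⟩
    exact ⟨matchingOfPerm_mem_Gset_iff.2 hσ, fun i => ⟨σ⁻¹ i, rfl⟩⟩

theorem class_connection_coefficients_eq_bipartite_matchings_general
    (n : ℕ) (m v : Multiset ℕ)
    (π : Equiv.Perm (Fin n)) :
    Set.ncard {st : Equiv.Perm (Fin n) × Equiv.Perm (Fin n) |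
        orbitType st.1 = m ∧ orbitType st.2 = v ∧ st.1 * st.2 = π}
      = Set.ncard {δ | δ ∈ Gset m v π ∧ IsBipartite δ} := by
  rw [setOf_mul_eq_eq_image (orbitType · = m) (orbitType · = v),
    bipartite_Gset_eq_image_matchingOfPerm,
    Set.ncard_image_of_injective _ fun _ _ h => congrArg Prod.fst h,
    Set.ncard_image_of_injective _ matchingOfPerm_injective]

theorem class_connection_coefficients_eq_bipartite_matchings
    (n : ℕ) (hn : 1 ≤ n) (l m v : Multiset ℕ)
    (hl : (∀ a ∈ l, 0 < a) ∧ l.sum = n)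
    (hm : (∀ a ∈ m, 0 < a) ∧ m.sum = n)
    (hv : (∀ a ∈ v, 0 < a) ∧ v.sum = n)
    (π : Equiv.Perm (Fin n)) (hπ : orbitType π = l) :
    Set.ncard {st : Equiv.Perm (Fin n) × Equiv.Perm (Fin n) |
        orbitType st.1 = m ∧ orbitType st.2 = v ∧ st.1 * st.2 = π}
      = Set.ncard {δ | δ ∈ Gset m v π ∧ IsBipartite δ} :=
  class_connection_coefficients_eq_bipartite_matchings_general n m v π
end
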